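/- Let N ≥ 1 and let κ_ν denote the ν-th prime number (κ₁ = 2, κ₂ = 3, …). For ν = 1,…,N define the real numbers ω_{ν,1} := √(κ_{ν+1})·(3 + 2√2), ω_{ν,2} := √(κ_{ν+1}), ω_{ν,3} := √(κ_{ν+1})·(2 + √2). Then: (1) for all ν₁,ν₂,ν₃ ∈ {1,…,N}, all k₁,k₂,k₃ ∈ {1,2,3}, and all signs ε₁,ε₂,ε₃ ∈ {−1,+1}, one has ε₁ω_{ν₁,k₁} + ε₂ω_{ν₂,k₂} + ε₃ω_{ν₃,k₃} ≠ 0; and (2) for all ν_i ∈ {1,…,N}, k_i ∈ {1,2,3}, ε_i ∈ {−1,+1} (i = 1,2,3,4), one has ε₁ω_{ν₁,k₁} + ε₂ω_{ν₂,k₂} + ε₃ω_{ν₃,k₃} + ε₄ω_{ν₄,k₄} = 0 if and only if either (A) the four signed terms cancel in pairs, i.e. there is a partition of {1,2,3,4} into two two-element sets {a,b} with (ν_a,k_a) = (ν_b,k_b) and ε_a = −ε_b, or (B) there exists ν ∈ {1,…,N} such that the 4-tuple (ε₁ω_{ν₁,k₁}, ε₂ω_{ν₂,k₂}, ε₃ω_{ν₃,k₃},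 ε₄ω_{ν₄,k₄}) is a permutation of (ω_{ν,1}, ω_{ν,2}, −ω_{ν,3}, −ω_{ν,3}) or of (−ω_{ν,1}, −ω_{ν,2}, ω_{ν,3}, ω_{ν,3}). -/

import Mathlib

/-!
Write `ω_{ν,k} = c_k √p` with `p = κ_{ν+1}` an odd prime and `c_k ∈ ℤ[√2]`
(`c_1 = 3 + 2√2`, `c_2 = 1`, `c_3 = 2 + √2`). Grouping a signed sum of at most four
frequencies by primes gives a relation `∑ α_p √p = 0` with `α_p ∈ ℚ(√2)`. Squaring such a
relation with two, three or four nonzero terms would put `√(pq)` or `√(pqrs)` in `ℚ(√2)`, which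
is impossible for distinct odd primes, so the signed coefficients over each prime cancel in
`ℤ[√2]`. The rest is a finite check: the coefficients over one prime cannot cancel with an odd
number of terms, and four terms cancel only in pairs or through the resonance
`c_1 + c_2 = 2 c_3`.
-/

/-- The frequencies `ω_{ν,1} = √κ_{ν+1}(3+2√2)`, `ω_{ν,2} = √κ_{ν+1}`,
`ω_{ν,3} = √κ_{ν+1}(2+√2)`, where `κ_ν` is the `ν`-th prime (here `ν : Fin N` is 0-based,
so that `Nat.nth Nat.Prime (ν+1)` is the paper's `κ_{ν+1}` with `κ₁ = 2`). -/
noncomputable def uniOmega (N : ℕ) (ν : Fin N) : Fin 3 → ℝ :=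
  ![Real.sqrt (Nat.nth Nat.Prime (ν.1 + 1)) * (3 + 2 * Real.sqrt 2),
    Real.sqrt (Nat.nth Nat.Prime (ν.1 + 1)),
    Real.sqrt (Nat.nth Nat.Prime (ν.1 + 1)) * (2 + Real.sqrt 2)]

open Finset

theorem two_ne_mul_self (n : ℤ) : (2 : ℤ) ≠ n * n := fun h =>
  Int.sq_ne_two_mod_four n (by rw [← h]; rfl)

noncomputable def sqrtTwoHom : ℤ√2 →+* ℝ := Zsqrtd.toReal zero_le_two

theorem sqrtTwoHom_apply (z : ℤ√2) : sqrtTwoHom z = z.re + z.im * √2 := by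
  simp [sqrtTwoHom]

theorem sqrtTwoHom_injective : Function.Injective sqrtTwoHom :=
  Zsqrtd.toReal_injective _ two_ne_mul_self

noncomputable def qSqrtTwo : Subfield ℝ := Subfield.closure sqrtTwoHom.range

theorem exists_eq_div_of_mem_qSqrtTwo {x : ℝ} (hx : x ∈ qSqrtTwo) :
    ∃ a b : ℤ√2, sqrtTwoHom a / sqrtTwoHom b = x := by
  rw [qSqrtTwo, Subfield.mem_closure_iff, Subring.closure_eq] at hx
  obtain ⟨_, ⟨a, rfl⟩, _, ⟨b, rfl⟩, h⟩ := hx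
  exact ⟨a, b, h⟩

theorem sqrt_natCast_notMem_qSqrtTwo {n : ℕ} (hn : ¬IsSquare n) (h2n : ¬IsSquare (2 * n)) :
    √n ∉ qSqrtTwo := by
  rw [← irrational_sqrt_natCast_iff] at hn h2n
  intro hmem
  obtain ⟨a, b, hab⟩ := exists_eq_div_of_mem_qSqrtTwo hmem
  have hb : sqrtTwoHom b ≠ 0 := by
    intro hb
    rw [hb, div_zero] at hab
    exact hn.ne_rat 0 (by simp [← hab])
  have hN : b.norm ≠ 0 :=
    (Zsqrtd.norm_eq_zero two_ne_mul_self b).not.2 (fun h => hb (h ▸ map_zero _))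
  -- multiplying by the conjugate of `b` clears the denominator
  have hc : sqrtTwoHom (a * star b) = √n * b.norm := by
    rw [map_mul, (div_eq_iff hb).1 hab, mul_assoc, ← map_mul, ← Zsqrtd.norm_eq_mul_conj,
      map_intCast]
  generalize a * star b = c at hc
  obtain ⟨c₁, c₂⟩ := c
  rw [sqrtTwoHom_apply] at hc
  have hsq : (c₁ : ℝ) ^ 2 + 2 * c₂ ^ 2 + 2 * c₁ * c₂ * √2 = n * b.norm ^ 2 := by
    have := congrArg (· ^ 2) hc
    simp only [mul_pow, Real.sq_sqrt (Nat.cast_nonneg _), add_sq, Real.sq_sqrt zero_le_two] at this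
    linear_combination this
  have hN' : (b.norm : ℝ) ≠ 0 := by exact_mod_cast hN
  rcases eq_or_ne c₁ 0 with rfl | h₁
  · apply h2n.ne_rational (2 * c₂) b.norm
    rw [Nat.cast_mul, Nat.cast_ofNat, Real.sqrt_mul zero_le_two, eq_div_iff hN', mul_assoc, ← hc]
    push_cast
    linear_combination (c₂ : ℝ) * Real.mul_self_sqrt zero_le_two
  rcases eq_or_ne c₂ 0 with rfl | h₂
  · exact hn.ne_rational c₁ b.norm (by rw [eq_div_iff hN', ← hc]; simp)
  · apply irrational_sqrt_two.ne_rational (n * b.norm ^ 2 - c₁ ^ 2 - 2 * c₂ ^ 2) (2 * c₁ * c₂)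
    rw [eq_div_iff (by positivity)]
    push_cast
    linear_combination hsq

namespace Subfield

variable {K : Subfield ℝ} {a b c d x y z w : K}

theorem coe_two : ((2 : K) : ℝ) = 2 := rfl

theorem sqrt_mul_mem_of_add_add_eq_zero (ha : 0 ≤ (a : ℝ)) (hb : 0 ≤ (b : ℝ))
    (hc : 0 ≤ (c : ℝ)) (hx : x ≠ 0) (hy : y ≠ 0)
    (h : x * √a + y * √b + z * √c = 0) : √(a * b : ℝ) ∈ K := by
  have hxy : (2 * x * y : ℝ) ≠ 0 := by simp [hx, hy]
  have key : √(a * b : ℝ) = ((z ^ 2 * c - x ^ 2 * a - y ^ 2 * b) / (2 * x * y) : K) := by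
    push_cast [coe_two]
    rw [eq_div_iff hxy, Real.sqrt_mul ha]
    linear_combination (x * √a + y * √b - z * √c) * h - x ^ 2 * Real.sq_sqrt ha
      - y ^ 2 * Real.sq_sqrt hb + z ^ 2 * Real.sq_sqrt hc
  exact key ▸ SetLike.coe_mem _

theorem sqrt_mul_mem_of_add_add_add_eq_zero (ha : 0 ≤ (a : ℝ)) (hb : 0 ≤ (b : ℝ))
    (hc : 0 ≤ (c : ℝ)) (hd : 0 ≤ (d : ℝ)) (hx : x ≠ 0) (hy : y ≠ 0) (hz : z ≠ 0) (hw : w ≠ 0)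
    (h : x * √a + y * √b + z * √c + w * √d = 0) : √(a * b * (c * d) : ℝ) ∈ K := by
  -- square `x√a + y√b = -(z√c + w√d)` to get a relation between `√(ab)`, `√(cd)` and `√1`
  have h' : (2 * x * y : K) * √(a * b : K) + (-(2 * z * w) : K) * √(c * d : K)
      + (x ^ 2 * a + y ^ 2 * b - z ^ 2 * c - w ^ 2 * d : K) * √(1 : K) = 0 := by
    push_cast [coe_two]
    rw [Real.sqrt_mul ha, Real.sqrt_mul hc, Real.sqrt_one]
    linear_combination (x * √a + y * √b - z * √c - w * √d) * h - x ^ 2 * Real.sq_sqrt ha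
      - y ^ 2 * Real.sq_sqrt hb + z ^ 2 * Real.sq_sqrt hc + w ^ 2 * Real.sq_sqrt hd
  simpa using sqrt_mul_mem_of_add_add_eq_zero (by push_cast; positivity)
    (by push_cast; positivity) (by simp) (by simp [hx, hy]) (by simp [hz, hw]) h'

end Subfield

theorem Nat.Prime.not_isSquare_mul {p m : ℕ} (hp : p.Prime) (hm : ¬p ∣ m) :
    ¬IsSquare (p * m) := by
  rintro ⟨k, hk⟩
  have hpk : p ∣ k := hp.dvd_mul.1 (hk ▸ dvd_mul_right p m) |>.elim id id
  exact hm ((Nat.mul_dvd_mul_iff_left hp.pos).1 (hk ▸ mul_dvd_mul hpk hpk))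

theorem sqrt_prime_mul_notMem_qSqrtTwo {p m : ℕ} (hp : p.Prime) (hp2 : p ≠ 2) (hm : ¬p ∣ m) :
    √((p : qSqrtTwo) * (m : qSqrtTwo) : ℝ) ∉ qSqrtTwo := by
  have h2m : ¬p ∣ 2 * m := by
    rw [hp.dvd_mul, Nat.prime_dvd_prime_iff_eq hp Nat.prime_two]
    tauto
  simpa using sqrt_natCast_notMem_qSqrtTwo (hp.not_isSquare_mul hm)
    (mul_left_comm 2 p m ▸ hp.not_isSquare_mul h2m)

theorem sum_mul_sqrt_prime_ne_zero {ι : Type*} {t : Finset ι} (ht : t.Nonempty) (ht4 : #t ≤ 4)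
    {q : ι → ℕ} (hq : ∀ i ∈ t, (q i).Prime ∧ q i ≠ 2) (hinj : Set.InjOn q t)
    {α : ι → qSqrtTwo} (hα : ∀ i ∈ t, α i ≠ 0) : ∑ i ∈ t, (α i : ℝ) * √(q i) ≠ 0 := by
  classical
  have hnotMem : ∀ i ∈ t, ∀ m : ℕ, ¬q i ∣ m →
      √((q i : qSqrtTwo) * (m : qSqrtTwo) : ℝ) ∉ qSqrtTwo := fun i hi _ =>
    sqrt_prime_mul_notMem_qSqrtTwo (hq i hi).1 (hq i hi).2
  have hndvd : ∀ i ∈ t, ∀ j ∈ t, i ≠ j → ¬q i ∣ q j := fun i hi j hj hij =>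
    (Nat.prime_dvd_prime_iff_eq (hq i hi).1 (hq j hj).1).not.2 (hinj.ne hi hj hij)
  have hpos : ∀ i, (0 : ℝ) ≤ ((q i : qSqrtTwo) : ℝ) := fun i => by simp
  have hcast : ∀ i, √(q i : ℝ) = √((q i : qSqrtTwo) : ℝ) := fun i => by simp
  simp only [hcast]
  intro hsum
  rcases (by have := ht.card_pos; omega : #t = 1 ∨ #t = 2 ∨ #t = 3 ∨ #t = 4)
    with h1 | h2 | h3 | h4
  · obtain ⟨a, rfl⟩ := card_eq_one.1 h1
    have := (hq a (mem_singleton_self a)).1.ne_zero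
    exact hα a (mem_singleton_self a) (by simpa [this] using hsum)
  · obtain ⟨a, b, hab, rfl⟩ := card_eq_two.1 h2
    rw [sum_pair hab] at hsum
    exact hnotMem a (by simp) _ (hndvd a (by simp) b (by simp) hab)
      (Subfield.sqrt_mul_mem_of_add_add_eq_zero (c := 0) (z := 0) (hpos a) (hpos b) le_rfl
        (hα a (by simp)) (hα b (by simp)) (by simpa using hsum))
  · obtain ⟨a, b, c, hab, hac, hbc, rfl⟩ := card_eq_three.1 h3
    rw [sum_insert (by simp [hab, hac]), sum_pair hbc, ← add_assoc] at hsum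
    exact hnotMem a (by simp) _ (hndvd a (by simp) b (by simp) hab)
      (Subfield.sqrt_mul_mem_of_add_add_eq_zero (hpos a) (hpos b) (hpos c)
        (hα a (by simp)) (hα b (by simp)) hsum)
  · obtain ⟨a, t, hat, rfl, ht3⟩ := card_eq_succ.1 h4
    obtain ⟨b, c, d, hbc, hbd, hcd, rfl⟩ := card_eq_three.1 ht3
    simp only [mem_insert, mem_singleton, not_or] at hat
    obtain ⟨hab, hac, had⟩ := hat
    rw [sum_insert (by simp [hab, hac, had]), sum_insert (by simp [hbc, hbd]), sum_pair hcd,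
      ← add_assoc, ← add_assoc] at hsum
    have hdvd : ¬q a ∣ q b * (q c * q d) := by
      simp only [(hq a (by simp)).1.dvd_mul, not_or]
      exact ⟨hndvd a (by simp) b (by simp) hab, hndvd a (by simp) c (by simp) hac,
        hndvd a (by simp) d (by simp) had⟩
    have := Subfield.sqrt_mul_mem_of_add_add_add_eq_zero (hpos a) (hpos b) (hpos c) (hpos d)
      (hα a (by simp)) (hα b (by simp)) (hα c (by simp)) (hα d (by simp)) hsum
    exact hnotMem a (by simp) _ hdvd (by simpa [mul_assoc] using this)

theorem eq_zero_of_sum_mul_sqrt_prime_eq_zero {ι : Type*} {s : Finset ι} (hs : #s ≤ 4)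
    {q : ι → ℕ} (hq : ∀ i ∈ s, (q i).Prime ∧ q i ≠ 2) (hinj : Set.InjOn q s)
    {α : ι → qSqrtTwo} (h : ∑ i ∈ s, (α i : ℝ) * √(q i) = 0) : ∀ i ∈ s, α i = 0 := by
  classical
  by_contra! hne
  refine sum_mul_sqrt_prime_ne_zero (t := {i ∈ s | α i ≠ 0}) ?_ ((card_filter_le _ _).trans hs)
    (fun i hi => hq i (mem_filter.1 hi).1) (hinj.mono (coe_subset.2 (filter_subset _ _)))
    (fun i hi => (mem_filter.1 hi).2) ?_
  · simpa [filter_nonempty_iff] using hne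
  · rw [sum_filter_of_ne (p := fun i => α i ≠ 0) fun i _ hi h0 => hi (by simp [h0]), h]

def fiber {ι α : Type*} [Fintype ι] [DecidableEq α] (ν : ι → α) (i : ι) : Finset ι :=
  {j | ν j = ν i}

theorem mem_fiber {ι α : Type*} [Fintype ι] [DecidableEq α] {ν : ι → α} {i j : ι} :
    j ∈ fiber ν i ↔ ν j = ν i := by
  simp [fiber]

theorem sum_fiber_eq_zero_of_sum_mul_sqrt_eq_zero {ι κ : Type*} [Fintype ι] [DecidableEq κ]
    (hι : Fintype.card ι ≤ 4) {q : κ → ℕ} (hq : ∀ y, (q y).Prime ∧ q y ≠ 2)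
    (hinj : Function.Injective q) (ν : ι → κ) (β : ι → ℤ√2)
    (h : ∑ i, sqrtTwoHom (β i) * √(q (ν i)) = 0) (i : ι) : ∑ j ∈ fiber ν i, β j = 0 := by
  let α : κ → qSqrtTwo := fun y =>
    ⟨sqrtTwoHom (∑ j with ν j = y, β j), Subfield.subset_closure ⟨_, rfl⟩⟩
  have hgroup : ∑ y ∈ univ.image ν, (α y : ℝ) * √(q y) = 0 := by
    rw [← h, ← sum_fiberwise_of_maps_to fun i _ => mem_image_of_mem ν (mem_univ i)]
    refine sum_congr rfl fun y _ => ?_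
    dsimp only [α]
    rw [map_sum, sum_mul]
    exact sum_congr rfl fun j hj => by rw [(mem_filter.1 hj).2]
  have := eq_zero_of_sum_mul_sqrt_prime_eq_zero (card_image_le.trans hι) (fun y _ => hq y)
    hinj.injOn hgroup (ν i) (mem_image_of_mem ν (mem_univ i))
  exact sqrtTwoHom_injective (by simpa [α, fiber] using congrArg Subtype.val this)

theorem exists_fiber_eq {ι α : Type*} [Fintype ι] [Nonempty ι] [DecidableEq ι] [DecidableEq α]
    (ν : ι → α) : ∃ μ : ι → ι, fiber μ = fiber ν := by
  refine ⟨Function.invFun ν ∘ ν, funext fun i => Finset.ext fun j => ?_⟩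
  simp only [mem_fiber, Function.comp_apply]
  exact ⟨fun h => by simpa only [Function.invFun_eq ⟨_, rfl⟩] using congrArg ν h,
    fun h => by rw [h]⟩

theorem fiber_eq_univ_or_singleton_of_fin_three {α : Type*} [DecidableEq α] (ν : Fin 3 → α) :
    fiber ν 0 = univ ∨ ∃ i, fiber ν i = {i} := by
  obtain ⟨μ, hμ⟩ := exists_fiber_eq ν
  rw [← hμ]
  clear hμ
  revert μ
  unfold fiber
  decide

set_option maxRecDepth 10000 in
theorem fiber_eq_univ_or_singleton_or_pairs_of_fin_four {α : Type*} [DecidableEq α] (ν : Fin 4 → α) :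
    fiber ν 0 = univ ∨ (∃ i, fiber ν i = {i}) ∨
      ∃ a b c d : Fin 4, a ≠ b ∧ a ≠ c ∧ a ≠ d ∧ b ≠ c ∧ b ≠ d ∧ c ≠ d ∧
        fiber ν a = {a, b} ∧ fiber ν c = {c, d} := by
  obtain ⟨μ, hμ⟩ := exists_fiber_eq ν
  rw [← hμ]
  clear hμ
  revert μ
  unfold fiber
  decide

def freqCoeff : Fin 3 → ℤ√2 := ![⟨3, 2⟩, 1, ⟨2, 1⟩]

def resonance : Fin 4 → ℤ√2 := ![freqCoeff 0, freqCoeff 1, -freqCoeff 2, -freqCoeff 2]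

theorem units_mul_freqCoeff_ne_zero : ∀ (u : ℤˣ) (k : Fin 3), (u : ℤ√2) * freqCoeff k ≠ 0 := by
  decide

theorem eq_and_eq_neg_of_units_mul_freqCoeff_add_eq_zero : ∀ (u v : ℤˣ) (k l : Fin 3),
    (u : ℤ√2) * freqCoeff k + v * freqCoeff l = 0 → k = l ∧ u = -v := by
  decide

theorem sum_units_mul_freqCoeff_ne_zero_three :
    ∀ (u : Fin 3 → ℤˣ) (k : Fin 3 → Fin 3), ∑ i, (u i : ℤ√2) * freqCoeff (k i) ≠ 0 := by
  decide

set_option maxRecDepth 10000 in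
set_option synthInstance.maxSize 2000 in
theorem pairs_or_resonance_of_sum_units_mul_freqCoeff_eq_zero :
    ∀ (u : Fin 4 → ℤˣ) (k : Fin 4 → Fin 3), ∑ i, (u i : ℤ√2) * freqCoeff (k i) = 0 →
      (∃ a b c d : Fin 4, a ≠ b ∧ a ≠ c ∧ a ≠ d ∧ b ≠ c ∧ b ≠ d ∧ c ≠ d ∧
        k a = k b ∧ u a = -u b ∧ k c = k d ∧ u c = -u d) ∨
      ∃ σ : Equiv.Perm (Fin 4), (∀ i, (u i : ℤ√2) * freqCoeff (k i) = resonance (σ i)) ∨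
        (∀ i, (u i : ℤ√2) * freqCoeff (k i) = -resonance (σ i)) := by
  decide

section
variable {α : Type*} [DecidableEq α]

theorem not_forall_sum_fiber_eq_zero_three (ν : Fin 3 → α) (u : Fin 3 → ℤˣ)
    (k : Fin 3 → Fin 3) :
    ¬∀ i, ∑ j ∈ fiber ν i, (u j : ℤ√2) * freqCoeff (k j) = 0 := by
  intro h
  rcases fiber_eq_univ_or_singleton_of_fin_three ν with huniv | ⟨i, hi⟩
  · exact sum_units_mul_freqCoeff_ne_zero_three u k (huniv ▸ h 0)
  · exact units_mul_freqCoeff_ne_zero (u i) (k i) (by simpa [hi] using h i)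

theorem pairs_or_resonance_of_sum_fiber_eq_zero (ν : Fin 4 → α) (u : Fin 4 → ℤˣ)
    (k : Fin 4 → Fin 3) (h : ∀ i, ∑ j ∈ fiber ν i, (u j : ℤ√2) * freqCoeff (k j) = 0) :
    (∃ a b c d : Fin 4, a ≠ b ∧ a ≠ c ∧ a ≠ d ∧ b ≠ c ∧ b ≠ d ∧ c ≠ d ∧
      ν a = ν b ∧ k a = k b ∧ u a = -u b ∧ ν c = ν d ∧ k c = k d ∧ u c = -u d) ∨
    (∀ i, ν i = ν 0) ∧ ∃ σ : Equiv.Perm (Fin 4),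
      (∀ i, (u i : ℤ√2) * freqCoeff (k i) = resonance (σ i)) ∨
        (∀ i, (u i : ℤ√2) * freqCoeff (k i) = -resonance (σ i)) := by
  rcases fiber_eq_univ_or_singleton_or_pairs_of_fin_four ν with
    huniv | ⟨i, hi⟩ | ⟨a, b, c, d, hab, hac, had, hbc, hbd, hcd, h₁, h₂⟩
  · have hν : ∀ i, ν i = ν 0 := fun i => mem_fiber.1 (huniv ▸ mem_univ i)
    rcases pairs_or_resonance_of_sum_units_mul_freqCoeff_eq_zero u k (huniv ▸ h 0) with
      ⟨a, b, c, d, hab, hac, had, hbc, hbd, hcd, hk₁, hu₁, hk₂, hu₂⟩ | hres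
    · exact Or.inl ⟨a, b, c, d, hab, hac, had, hbc, hbd, hcd, (hν a).trans (hν b).symm, hk₁, hu₁,
        (hν c).trans (hν d).symm, hk₂, hu₂⟩
    · exact Or.inr ⟨hν, hres⟩
  · exact absurd (by simpa [hi] using h i) (units_mul_freqCoeff_ne_zero (u i) (k i))
  · have hνab : ν b = ν a := mem_fiber.1 (h₁ ▸ by simp)
    have hνcd : ν d = ν c := mem_fiber.1 (h₂ ▸ by simp)
    obtain ⟨hk₁, hu₁⟩ := eq_and_eq_neg_of_units_mul_freqCoeff_add_eq_zero _ _ _ _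
      (by simpa [h₁, sum_pair hab] using h a)
    obtain ⟨hk₂, hu₂⟩ := eq_and_eq_neg_of_units_mul_freqCoeff_add_eq_zero _ _ _ _
      (by simpa [h₂, sum_pair hcd] using h c)
    exact Or.inl ⟨a, b, c, d, hab, hac, had, hbc, hbd, hcd, hνab.symm, hk₁, hu₁, hνcd.symm, hk₂,
      hu₂⟩

end

theorem nth_prime_succ_prime_and_ne_two (n : ℕ) :
    (Nat.nth Nat.Prime (n + 1)).Prime ∧ Nat.nth Nat.Prime (n + 1) ≠ 2 :=
  ⟨Nat.prime_nth_prime _, fun h => n.succ_ne_zero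
    (Nat.nth_injective Nat.infinite_setOfPred_prime (h.trans Nat.nth_prime_zero_eq_two.symm))⟩

theorem units_mul_uniOmega (N : ℕ) (ν : Fin N) (u : ℤˣ) (k : Fin 3) :
    ((u : ℤ) : ℝ) * uniOmega N ν k =
      sqrtTwoHom ((u : ℤ√2) * freqCoeff k) * √(Nat.nth Nat.Prime (ν.1 + 1)) := by
  fin_cases k <;> simp [uniOmega, freqCoeff, sqrtTwoHom_apply] <;> ring

theorem sqrtTwoHom_resonance_mul (N : ℕ) (ν : Fin N) (j : Fin 4) :
    sqrtTwoHom (resonance j) * √(Nat.nth Nat.Prime (ν.1 + 1)) =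
      ![uniOmega N ν 0, uniOmega N ν 1, -uniOmega N ν 2, -uniOmega N ν 2] j := by
  fin_cases j <;> simp [uniOmega, resonance, freqCoeff, sqrtTwoHom_apply] <;> ring

theorem sqrtTwoHom_neg_resonance_mul (N : ℕ) (ν : Fin N) (j : Fin 4) :
    sqrtTwoHom (-resonance j) * √(Nat.nth Nat.Prime (ν.1 + 1)) =
      ![-uniOmega N ν 0, -uniOmega N ν 1, uniOmega N ν 2, uniOmega N ν 2] j := by
  fin_cases j <;> simp [uniOmega, resonance, freqCoeff, sqrtTwoHom_apply] <;> ring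

theorem uniOmega_zero_add_uniOmega_one (N : ℕ) (ν : Fin N) :
    uniOmega N ν 0 + uniOmega N ν 1 = 2 * uniOmega N ν 2 := by
  simp [uniOmega]
  ring

theorem sum_fiber_eq_zero_of_sum_units_mul_uniOmega_eq_zero {n N : ℕ} (hn : n ≤ 4)
    (ν : Fin n → Fin N) (u : Fin n → ℤˣ) (k : Fin n → Fin 3)
    (h : ∑ i, ((u i : ℤ) : ℝ) * uniOmega N (ν i) (k i) = 0) (i : Fin n) :
    ∑ j ∈ fiber ν i, (u j : ℤ√2) * freqCoeff (k j) = 0 :=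
  sum_fiber_eq_zero_of_sum_mul_sqrt_eq_zero (by simpa using hn)
    (fun ν => nth_prime_succ_prime_and_ne_two ν.1)
    (fun _ _ h => Fin.ext (by simpa using Nat.nth_injective Nat.infinite_setOfPred_prime h)) ν _
    (by simpa only [units_mul_uniOmega] using h) i

theorem exists_units_of_eq_one_or_eq_neg_one {ι : Type*} {ε : ι → ℝ} (hε : ∀ i, ε i = 1 ∨ ε i = -1) :
    ∃ u : ι → ℤˣ, ε = fun i => ((u i : ℤ) : ℝ) := by
  have : ∀ i, ∃ v : ℤˣ, ε i = ((v : ℤ) : ℝ) := fun i =>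
    (hε i).elim (fun h => ⟨1, by simp [h]⟩) (fun h => ⟨-1, by simp [h]⟩)
  choose u hu using this
  exact ⟨u, funext hu⟩

theorem Fin.sum_four_eq_zero_of_pairs {M : Type*} [AddCommMonoid M] {f : Fin 4 → M}
    {a b c d : Fin 4} (hab : a ≠ b) (hac : a ≠ c) (had : a ≠ d) (hbc : b ≠ c) (hbd : b ≠ d)
    (hcd : c ≠ d) (h₁ : f a + f b = 0) (h₂ : f c + f d = 0) : ∑ i, f i = 0 := by
  have huniv : ∀ a b c d : Fin 4, a ≠ b → a ≠ c → a ≠ d → b ≠ c → b ≠ d → c ≠ d →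
      ({a, b, c, d} : Finset (Fin 4)) = univ := by
    decide
  rw [← huniv a b c d hab hac had hbc hbd hcd, sum_insert (by simp [hab, hac, had]),
    sum_insert (by simp [hbc, hbd]), sum_pair hcd, ← add_assoc, h₁, h₂, add_zero]

theorem stmt19_general (N : ℕ) :
    (∀ (ν : Fin 3 → Fin N) (k : Fin 3 → Fin 3) (ε : Fin 3 → ℝ),
      (∀ i, ε i = 1 ∨ ε i = -1) →
      (∑ i, ε i * uniOmega N (ν i) (k i)) ≠ 0) ∧
    (∀ (ν : Fin 4 → Fin N) (k : Fin 4 → Fin 3) (ε : Fin 4 → ℝ),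
      (∀ i, ε i = 1 ∨ ε i = -1) →
      ((∑ i, ε i * uniOmega N (ν i) (k i)) = 0 ↔
        ((∃ a b c d : Fin 4, a ≠ b ∧ a ≠ c ∧ a ≠ d ∧ b ≠ c ∧ b ≠ d ∧ c ≠ d ∧
            ν a = ν b ∧ k a = k b ∧ ε a = -ε b ∧
            ν c = ν d ∧ k c = k d ∧ ε c = -ε d) ∨
          (∃ ν₀ : Fin N, ∃ σ : Equiv.Perm (Fin 4),
            (∀ i, ε i * uniOmega N (ν i) (k i) =
              ![uniOmega N ν₀ 0, uniOmega N ν₀ 1,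
                -uniOmega N ν₀ 2, -uniOmega N ν₀ 2] (σ i)) ∨
            (∀ i, ε i * uniOmega N (ν i) (k i) =
              ![-uniOmega N ν₀ 0, -uniOmega N ν₀ 1,
                uniOmega N ν₀ 2, uniOmega N ν₀ 2] (σ i)))))) := by
  refine ⟨fun ν k ε hε h => ?_, fun ν k ε hε => ⟨fun h => ?_, ?_⟩⟩
  · obtain ⟨u, rfl⟩ := exists_units_of_eq_one_or_eq_neg_one hε
    exact not_forall_sum_fiber_eq_zero_three ν u k
      (sum_fiber_eq_zero_of_sum_units_mul_uniOmega_eq_zero (by norm_num) ν u k h)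
  · obtain ⟨u, rfl⟩ := exists_units_of_eq_one_or_eq_neg_one hε
    rcases pairs_or_resonance_of_sum_fiber_eq_zero ν u k
        (sum_fiber_eq_zero_of_sum_units_mul_uniOmega_eq_zero le_rfl ν u k h) with
      ⟨a, b, c, d, hab, hac, had, hbc, hbd, hcd, hν₁, hk₁, hu₁, hν₂, hk₂, hu₂⟩ | ⟨hν, σ, hσ | hσ⟩
    · exact Or.inl ⟨a, b, c, d, hab, hac, had, hbc, hbd, hcd, hν₁, hk₁, by simp [hu₁], hν₂, hk₂,
        by simp [hu₂]⟩
    · refine Or.inr ⟨ν 0, σ, Or.inl fun i => ?_⟩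
      rw [units_mul_uniOmega, hσ, hν, sqrtTwoHom_resonance_mul]
    · refine Or.inr ⟨ν 0, σ, Or.inr fun i => ?_⟩
      rw [units_mul_uniOmega, hσ, hν, sqrtTwoHom_neg_resonance_mul]
  · rintro (⟨a, b, c, d, hab, hac, had, hbc, hbd, hcd, hν₁, hk₁, hε₁, hν₂, hk₂, hε₂⟩ |
      ⟨ν₀, σ, hσ | hσ⟩)
    · exact Fin.sum_four_eq_zero_of_pairs hab hac had hbc hbd hcd
        (by rw [hν₁, hk₁, hε₁]; ring) (by rw [hν₂, hk₂, hε₂]; ring)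
    · rw [Fintype.sum_congr _ _ hσ, Equiv.sum_comp σ, Fin.sum_univ_four]
      simp only [Matrix.cons_val]
      linear_combination uniOmega_zero_add_uniOmega_one N ν₀
    · rw [Fintype.sum_congr _ _ hσ, Equiv.sum_comp σ, Fin.sum_univ_four]
      simp only [Matrix.cons_val]
      linear_combination -uniOmega_zero_add_uniOmega_one N ν₀

/-- (1) No signed sum of three of the frequencies `ω_{ν,k}` vanishes.
(2) A signed sum of four of the frequencies vanishes iff either (A) the signed terms
cancel in pairs, or (B) for some `ν` the 4-tuple of signed frequencies is a permutation
of `(ω_{ν,1}, ω_{ν,2}, -ω_{ν,3}, -ω_{ν,3})` or of `(-ω_{ν,1}, -ω_{ν,2}, ω_{ν,3}, ω_{ν,3})`. -/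
theorem stmt19 (N : ℕ) (hN : 1 ≤ N) :
    (∀ (ν : Fin 3 → Fin N) (k : Fin 3 → Fin 3) (ε : Fin 3 → ℝ),
      (∀ i, ε i = 1 ∨ ε i = -1) →
      (∑ i, ε i * uniOmega N (ν i) (k i)) ≠ 0) ∧
    (∀ (ν : Fin 4 → Fin N) (k : Fin 4 → Fin 3) (ε : Fin 4 → ℝ),
      (∀ i, ε i = 1 ∨ ε i = -1) →
      ((∑ i, ε i * uniOmega N (ν i) (k i)) = 0 ↔
        ((∃ a b c d : Fin 4, a ≠ b ∧ a ≠ c ∧ a ≠ d ∧ b ≠ c ∧ b ≠ d ∧ c ≠ d ∧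
            ν a = ν b ∧ k a = k b ∧ ε a = -ε b ∧
            ν c = ν d ∧ k c = k d ∧ ε c = -ε d) ∨
          (∃ ν₀ : Fin N, ∃ σ : Equiv.Perm (Fin 4),
            (∀ i, ε i * uniOmega N (ν i) (k i) =
              ![uniOmega N ν₀ 0, uniOmega N ν₀ 1,
                -uniOmega N ν₀ 2, -uniOmega N ν₀ 2] (σ i)) ∨
            (∀ i, ε i * uniOmega N (ν i) (k i) =
              ![-uniOmega N ν₀ 0, -uniOmega N ν₀ 1,
                uniOmega N ν₀ 2, uniOmega N ν₀ 2] (σ i)))))) :=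
  stmt19_general N
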